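/- Let X_1, …, X_k be i.i.d. random variables with values in a finite set U and common distribution p, let p̂ be the empirical distribution, and let U⁺ = {u : p_u > 0}. If 0 < δ < 1, ε > 0, and k ≥ 2|U⁺| / (ε·δ²), then with probability at least 1 − ε the inequalities d_KL(p̂, p) < δ and d(p̂, p) < δ hold simultaneously. -/

import Mathlib

/-!
The Pearson distance `χ²(q, p) = ∑_{u ∈ U⁺} (q_u - p_u)² / p_u` controls both distances: for a
distribution `q` supported in `U⁺`, `log x ≤ x - 1` gives `d_KL(q, p) ≤ χ²(q, p)` and
Cauchy–Schwarz gives `d(q, p)² ≤ χ²(q, p)`, so `χ²(p̂, p) < δ² < δ` suffices. Each count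
`k p̂_u` is a sum of `k` independent indicators, so `E (p̂_u - p_u)² = p_u (1 - p_u) / k` and
`E χ²(p̂, p) ≤ |U⁺| / k ≤ ε δ² / 2`; Markov's inequality then bounds the probability of
`χ²(p̂, p) ≥ δ²` by `ε / 2`. Samples of probability zero may hit `u ∉ U⁺` and are discarded.
-/

open Finset
open scoped Classical

/-- The empirical distribution of a sample `v = (X_1, …, X_k)` with values in the
finite set `U`: `p̂_u = (1/k)·#{i : X_i = u}`. -/
noncomputable def empDist {U : Type*} [Fintype U] {k : ℕ} (v : Fin k → U) (u : U) : ℝ :=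
  ((Finset.univ.filter fun i => v i = u).card : ℝ) / k

section ProductWeight

variable {ι U R : Type*} [Fintype ι] [DecidableEq ι] [Fintype U] [CommSemiring R] {p : U → R}

theorem sum_prod_mul_prod_eq_pow (hp1 : ∑ u, p u = 1) (s : Finset ι) (g : U → R) :
    ∑ v : ι → U, (∏ i, p (v i)) * ∏ i ∈ s, g (v i) = (∑ u, p u * g u) ^ s.card := by
  have hsplit : ∀ v : ι → U, (∏ i, p (v i)) * ∏ i ∈ s, g (v i)
      = ∏ i, p (v i) * (if i ∈ s then g (v i) else 1) := fun v => by
    rw [prod_mul_distrib, prod_ite_mem, univ_inter]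
  simp_rw [hsplit]
  rw [← Fintype.prod_sum (fun i u => p u * if i ∈ s then g u else 1)]
  have hfactor : ∀ i, ∑ u, p u * (if i ∈ s then g u else 1)
      = if i ∈ s then ∑ u, p u * g u else 1 := fun i => by split_ifs <;> simp [hp1]
  rw [prod_congr rfl fun i _ => hfactor i, prod_ite_mem, univ_inter, prod_const]

theorem sum_prod_eq_one (hp1 : ∑ u, p u = 1) : ∑ v : ι → U, ∏ i, p (v i) = 1 := by
  simpa using sum_prod_mul_prod_eq_pow (ι := ι) hp1 ∅ 1

theorem sum_prod_mul_apply_mul_apply (hp1 : ∑ u, p u = 1) (f : U → R) (i j : ι) :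
    ∑ v : ι → U, (∏ m, p (v m)) * (f (v i) * f (v j))
      = if i = j then ∑ u, p u * f u ^ 2 else (∑ u, p u * f u) ^ 2 := by
  split_ifs with hij
  · subst hij
    simpa [← sq] using sum_prod_mul_prod_eq_pow hp1 {i} (fun u => f u ^ 2)
  · simpa [prod_pair hij, card_pair hij] using sum_prod_mul_prod_eq_pow hp1 {i, j} f

theorem sum_prod_mul_sq_sum_eq (hp1 : ∑ u, p u = 1) {f : U → R} (hf : ∑ u, p u * f u = 0) :
    ∑ v : ι → U, (∏ i, p (v i)) * (∑ i, f (v i)) ^ 2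
      = Fintype.card ι * ∑ u, p u * f u ^ 2 := by
  calc ∑ v : ι → U, (∏ i, p (v i)) * (∑ i, f (v i)) ^ 2
      = ∑ i, ∑ j, ∑ v : ι → U, (∏ m, p (v m)) * (f (v i) * f (v j)) := by
        simp_rw [sq, sum_mul_sum, mul_sum]
        rw [sum_comm]
        exact sum_congr rfl fun i _ => sum_comm
    _ = Fintype.card ι * ∑ u, p u * f u ^ 2 := by
        simp [sum_prod_mul_apply_mul_apply hp1, hf]

end ProductWeight

theorem mul_sum_filter_le_le_sum_mul {α R : Type*} [CommSemiring R] [PartialOrder R]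
    [IsOrderedRing R] (s : Finset α) {w X : α → R}
    (hw : ∀ a ∈ s, 0 ≤ w a) (hX : ∀ a ∈ s, 0 ≤ X a) (c : R) :
    c * ∑ a ∈ s with c ≤ X a, w a ≤ ∑ a ∈ s, w a * X a := by
  rw [mul_sum]
  calc ∑ a ∈ s with c ≤ X a, c * w a
      ≤ ∑ a ∈ s with c ≤ X a, w a * X a :=
        sum_le_sum fun a ha => by
          rw [mul_comm]
          exact mul_le_mul_of_nonneg_left (mem_filter.1 ha).2 (hw a (mem_filter.1 ha).1)
    _ ≤ ∑ a ∈ s, w a * X a :=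
        sum_le_sum_of_subset_of_nonneg (filter_subset _ _) fun a ha _ =>
          mul_nonneg (hw a ha) (hX a ha)

theorem sum_filter_le_sum_filter_of_ne_zero {α R : Type*} [AddCommMonoid R] [PartialOrder R]
    [IsOrderedAddMonoid R] (s : Finset α) {w : α → R}
    (hw : ∀ a ∈ s, 0 ≤ w a) {P Q : α → Prop} [DecidablePred P] [DecidablePred Q]
    (hPQ : ∀ a ∈ s, w a ≠ 0 → P a → Q a) :
    ∑ a ∈ s with P a, w a ≤ ∑ a ∈ s with Q a, w a := by
  rw [sum_filter, sum_filter]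
  refine sum_le_sum fun a ha => ?_
  by_cases hwa : w a = 0
  · simp [hwa]
  by_cases hPa : P a
  · simp [hPa, hPQ a ha hwa hPa]
  · simp only [hPa, if_false]
    split_ifs
    exacts [hw a ha, le_rfl]

section Distances

variable {U : Type*} [Fintype U] {p q : U → ℝ}

noncomputable def klDist (q p : U → ℝ) : ℝ :=
  ∑ u ∈ univ with 0 < q u, q u * Real.log (q u / p u)

noncomputable def varDist (q p : U → ℝ) : ℝ :=
  ∑ u, |q u - p u|

noncomputable def chiSqDist (q p : U → ℝ) : ℝ :=
  ∑ u ∈ univ with 0 < p u, (q u - p u) ^ 2 / p u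

theorem chiSqDist_nonneg (q p : U → ℝ) : 0 ≤ chiSqDist q p :=
  sum_nonneg fun _ hu => div_nonneg (sq_nonneg _) (mem_filter.1 hu).2.le

theorem sum_filter_pos_eq_sum (hp0 : ∀ u, 0 ≤ p u) {f : U → ℝ} (hf : ∀ u, p u = 0 → f u = 0) :
    ∑ u ∈ univ with 0 < p u, f u = ∑ u, f u :=
  sum_filter_of_ne fun u _ hfu => (hp0 u).lt_of_ne' fun hpu => hfu (hf u hpu)

theorem klDist_le_chiSqDist (hp0 : ∀ u, 0 ≤ p u) (hp1 : ∑ u, p u = 1) (hq1 : ∑ u, q u = 1)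
    (hqp : ∀ u, p u = 0 → q u = 0) : klDist q p ≤ chiSqDist q p := by
  have hpos : ∀ u, q u ≠ 0 → 0 < p u := fun u hqu => (hp0 u).lt_of_ne' (mt (hqp u) hqu)
  calc klDist q p
      ≤ ∑ u ∈ univ with 0 < q u, (q u ^ 2 / p u - q u) := by
        refine sum_le_sum fun u hu => ?_
        have hqu := (mem_filter.1 hu).2
        have hpu := hpos u hqu.ne'
        calc q u * Real.log (q u / p u) ≤ q u * (q u / p u - 1) :=
              mul_le_mul_of_nonneg_left (Real.log_le_sub_one_of_pos (div_pos hqu hpu)) hqu.le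
          _ = q u ^ 2 / p u - q u := by ring
    _ ≤ ∑ u ∈ univ with 0 < p u, (q u ^ 2 / p u - q u) := by
        refine sum_le_sum_of_subset_of_nonneg (fun u hu =>
          mem_filter.2 ⟨mem_univ u, hpos u (mem_filter.1 hu).2.ne'⟩)
          fun u hu hqu => ?_
        have hpu := (mem_filter.1 hu).2
        have : q u ≤ 0 := not_lt.1 fun h => hqu (mem_filter.2 ⟨mem_univ u, h⟩)
        nlinarith [div_nonneg (sq_nonneg (q u)) hpu.le]
    _ = chiSqDist q p + (∑ u ∈ univ with 0 < p u, q u - ∑ u ∈ univ with 0 < p u, p u) := by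
        rw [chiSqDist, ← sum_sub_distrib, ← sum_add_distrib]
        refine sum_congr rfl fun u hu => ?_
        field_simp [(mem_filter.1 hu).2.ne']
        ring
    _ = chiSqDist q p := by
        rw [sum_filter_pos_eq_sum hp0 hqp, sum_filter_pos_eq_sum hp0 fun _ h => h, hp1, hq1]
        ring

theorem varDist_sq_le_chiSqDist (hp0 : ∀ u, 0 ≤ p u) (hp1 : ∑ u, p u = 1)
    (hqp : ∀ u, p u = 0 → q u = 0) : varDist q p ^ 2 ≤ chiSqDist q p := by
  have hcs := sq_sum_div_le_sum_sq_div (univ.filter fun u => 0 < p u) (fun u => |q u - p u|)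
    (g := p) fun u hu => (mem_filter.1 hu).2
  rw [sum_filter_pos_eq_sum hp0 fun _ h => h, hp1, div_one,
    sum_filter_pos_eq_sum hp0 fun u hpu => by simp [hpu, hqp u hpu]] at hcs
  simpa only [varDist, chiSqDist, sq_abs] using hcs

theorem klDist_lt_and_varDist_lt {δ : ℝ} (hδ0 : 0 < δ) (hδ1 : δ < 1) (hp0 : ∀ u, 0 ≤ p u)
    (hp1 : ∑ u, p u = 1) (hq1 : ∑ u, q u = 1) (hqp : ∀ u, p u = 0 → q u = 0)
    (hχ : chiSqDist q p < δ ^ 2) : klDist q p < δ ∧ varDist q p < δ := by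
  have hδ2 : δ ^ 2 < δ := by nlinarith
  refine ⟨(klDist_le_chiSqDist hp0 hp1 hq1 hqp).trans_lt (hχ.trans hδ2), ?_⟩
  exact lt_of_pow_lt_pow_left₀ 2 hδ0.le ((varDist_sq_le_chiSqDist hp0 hp1 hqp).trans_lt hχ)

end Distances

section Empirical

variable {U : Type*} [Fintype U] {k : ℕ}

theorem sum_empDist (hk : k ≠ 0) (v : Fin k → U) : ∑ u, empDist v u = 1 := by
  simp only [empDist, ← sum_div]
  rw [← Nat.cast_sum, ← card_eq_sum_card_fiberwise fun i _ => mem_univ (v i)]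
  simp [hk]

theorem empDist_eq_zero_of_prod_ne_zero {p : U → ℝ} {v : Fin k → U} (hv : ∏ i, p (v i) ≠ 0)
    {u : U} (hu : p u = 0) : empDist v u = 0 := by
  have hvu : ∀ i, v i ≠ u := fun i hi => prod_ne_zero_iff.1 hv i (mem_univ i) (hi ▸ hu)
  simp [empDist, hvu]

theorem empDist_sub_eq_sum_div (hk : k ≠ 0) (v : Fin k → U) (p : U → ℝ) (u : U) :
    empDist v u - p u = (∑ i, ((if v i = u then 1 else 0) - p u)) / k := by
  rw [sum_sub_distrib, sum_boole, sum_const, card_univ, Fintype.card_fin, nsmul_eq_mul,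
    empDist, sub_div, mul_div_cancel_left₀ _ (by exact_mod_cast hk)]

theorem sum_prod_mul_sq_empDist_sub {p : U → ℝ} (hp1 : ∑ u, p u = 1) (hk : k ≠ 0) (u : U) :
    ∑ v : Fin k → U, (∏ i, p (v i)) * (empDist v u - p u) ^ 2 = p u * (1 - p u) / k := by
  have hmean : ∑ x, p x * ((if x = u then 1 else 0) - p u) = 0 := by
    simp [mul_sub, sum_sub_distrib, ← sum_mul, hp1]
  have hvar : ∑ x, p x * ((if x = u then 1 else 0) - p u) ^ 2 = p u * (1 - p u) := by
    have hexpand : ∀ x, p x * ((if x = u then 1 else 0) - p u) ^ 2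
        = (if x = u then p x else 0) * (1 - 2 * p u) + p x * p u ^ 2 := fun x => by
      split_ifs <;> ring
    simp only [hexpand, sum_add_distrib, ← sum_mul, sum_ite_eq', mem_univ, if_true, hp1]
    ring
  have hsum := sum_prod_mul_sq_sum_eq (ι := Fin k) hp1 hmean
  rw [hvar, Fintype.card_fin] at hsum
  simp_rw [empDist_sub_eq_sum_div hk, div_pow, mul_div_assoc']
  rw [← sum_div, hsum]
  field_simp

theorem sum_prod_mul_chiSqDist_empDist_le {p : U → ℝ} (hp1 : ∑ u, p u = 1) (hk : k ≠ 0) :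
    ∑ v : Fin k → U, (∏ i, p (v i)) * chiSqDist (empDist v) p ≤ #{u | 0 < p u} / k := by
  calc ∑ v : Fin k → U, (∏ i, p (v i)) * chiSqDist (empDist v) p
      = ∑ u ∈ univ with 0 < p u, (1 - p u) / k := by
        simp_rw [chiSqDist, mul_sum]
        rw [sum_comm]
        refine sum_congr rfl fun u hu => ?_
        simp_rw [← mul_div_assoc, ← sum_div, sum_prod_mul_sq_empDist_sub hp1 hk]
        field_simp [(mem_filter.1 hu).2.ne']
    _ ≤ ∑ u ∈ univ with 0 < p u, 1 / (k : ℝ) :=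
        sum_le_sum fun u hu => by gcongr; linarith [(mem_filter.1 hu).2]
    _ = #{u | 0 < p u} / k := by simp [div_eq_mul_inv]

theorem mul_sum_prod_filter_le_chiSqDist_empDist_le {p : U → ℝ} (hp0 : ∀ u, 0 ≤ p u)
    (hp1 : ∑ u, p u = 1) (hk : k ≠ 0) (c : ℝ) :
    c * ∑ v : Fin k → U with c ≤ chiSqDist (empDist v) p, ∏ i, p (v i)
      ≤ #{u | 0 < p u} / k :=
  (mul_sum_filter_le_le_sum_mul univ (fun v _ => prod_nonneg fun i _ => hp0 (v i))
    (fun _ _ => chiSqDist_nonneg _ p) c).trans (sum_prod_mul_chiSqDist_empDist_le hp1 hk)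

end Empirical

/-- If `X_1, …, X_k` are i.i.d. with common distribution `p` on the
finite set `U`, `p̂` is the empirical distribution, `U⁺ = {u : p_u > 0}`, `0 < δ < 1`,
`ε > 0` and `k ≥ 2|U⁺|/(ε·δ²)`, then with probability at least `1 - ε` both
`d_KL(p̂, p) < δ` and `d(p̂, p) < δ` hold simultaneously.  (The probability of an event
of samples is the total product weight `∏ i, p (v i)` of the tuples `v` in it.) -/
theorem stmt9 {U : Type*} [Fintype U]
    (p : U → ℝ) (hp0 : ∀ u, 0 ≤ p u) (hp1 : ∑ u, p u = 1)
    (δ : ℝ) (hδ0 : 0 < δ) (hδ1 : δ < 1) (ε : ℝ) (hε : 0 < ε) (k : ℕ)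
    (hk : 2 * ((Finset.univ.filter fun u : U => 0 < p u).card : ℝ) / (ε * δ ^ 2) ≤ k) :
    1 - ε ≤
      ∑ v ∈ Finset.univ.filter (fun v : Fin k → U =>
          (∑ u ∈ Finset.univ.filter (fun u => 0 < empDist v u),
            empDist v u * Real.log (empDist v u / p u)) < δ ∧
          (∑ u, |empDist v u - p u|) < δ),
        ∏ i, p (v i) := by
  have hsupp : 0 < (#{u | 0 < p u} : ℝ) := by
    obtain ⟨u, -, hu⟩ := exists_ne_zero_of_sum_ne_zero (hp1.trans_ne one_ne_zero)
    exact Nat.cast_pos.2 (card_pos.2 ⟨u, mem_filter.2 ⟨mem_univ u, (hp0 u).lt_of_ne' hu⟩⟩)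
  have hkpos : (0 : ℝ) < k := (by positivity : (0 : ℝ) < _).trans_le hk
  have hk0 : k ≠ 0 := by exact_mod_cast hkpos.ne'
  have hw : ∀ v : Fin k → U, 0 ≤ ∏ i, p (v i) := fun v => prod_nonneg fun i _ => hp0 (v i)
  have hbad : ∑ v : Fin k → U with δ ^ 2 ≤ chiSqDist (empDist v) p, ∏ i, p (v i) ≤ ε / 2 := by
    refine le_of_mul_le_mul_left ?_ (by positivity : 0 < δ ^ 2)
    refine (mul_sum_prod_filter_le_chiSqDist_empDist_le hp0 hp1 hk0 _).trans ?_
    rw [div_le_iff₀ hkpos]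
    rw [div_le_iff₀ (by positivity)] at hk
    linarith
  calc 1 - ε
      ≤ 1 - ∑ v : Fin k → U with δ ^ 2 ≤ chiSqDist (empDist v) p, ∏ i, p (v i) := by linarith
    _ = ∑ v : Fin k → U with ¬ δ ^ 2 ≤ chiSqDist (empDist v) p, ∏ i, p (v i) := by
        rw [← sum_prod_eq_one (ι := Fin k) hp1, ← sum_filter_add_sum_filter_not univ
          (fun v : Fin k → U => δ ^ 2 ≤ chiSqDist (empDist v) p)]
        ring
    -- the two sums in the statement are `klDist (empDist v) p` and `varDist (empDist v) p`
    _ ≤ _ := sum_filter_le_sum_filter_of_ne_zero univ (fun v _ => hw v) fun v _ hv hχ =>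
        klDist_lt_and_varDist_lt hδ0 hδ1 hp0 hp1 (sum_empDist hk0 v)
          (fun _ => empDist_eq_zero_of_prod_ne_zero hv) (not_le.1 hχ)
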